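/- Let X, Y, W ∈ ℝ[t] with W ≠ 0, define U := X'·W − X·W' and V := Y'·W − Y·W'. Set w := deg W and r := max(deg X, deg Y), and assume w < r. Then the polynomial P̃ := U·(W·x − X) + V·(W·y − Y), viewed as a polynomial in t with coefficients in ℝ[x,y], has degree exactly 2r + w − 1 in t, and its coefficient of t^{2r+w−1} is the constant −(r − w)·c(W,w)·(c(X,r)² + c(Y,r)²), which is a nonzero real number. -/

import Mathlib

/-!
Here `U = wronskian W X` and `V = wronskian W Y`, and expanding gives
`P̃ = UW·x + VW·y − (UX + VY)`. A Wronskian `a b' − a' b` has degree below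
`deg a + deg b`, and when `deg a ≤ m`, `deg b ≤ n` its coefficient of `t^(m+n−1)` is
`(n − m)·c(a,m)·c(b,n)`. Hence `UW` and `VW` have degree `< 2r + w − 1` because `w < r`,
whereas `UX + VY` has degree at most `2r + w − 1` with coefficient
`(r − w)·c(W,w)·(c(X,r)² + c(Y,r)²)` there; this is nonzero because one of `c(X,r)`,
`c(Y,r)` is a leading coefficient.
-/

/-- Lift a univariate real polynomial in `t` to a polynomial in `t` whose coefficients
are polynomials in the two variables `x, y`. -/
noncomputable def liftT (p : Polynomial ℝ) : Polynomial (MvPolynomial (Fin 2) ℝ) :=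
  p.map MvPolynomial.C

/-- `P̃ := U·(W·x − X) + V·(W·y − Y)`, viewed as a polynomial in `t` with
coefficients in `ℝ[x,y]` (where `x = X 0`, `y = X 1`). -/
noncomputable def Ptilde (X Y W U V : Polynomial ℝ) :
    Polynomial (MvPolynomial (Fin 2) ℝ) :=
  liftT U * (liftT W * Polynomial.C (MvPolynomial.X 0) - liftT X)
    + liftT V * (liftT W * Polynomial.C (MvPolynomial.X 1) - liftT Y)

open Polynomial

namespace Polynomial

variable {R : Type*} [CommRing R]

theorem natDegree_wronskian_le (a b : R[X]) :
    (wronskian a b).natDegree ≤ a.natDegree + b.natDegree - 1 := by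
  by_cases hw : wronskian a b = 0
  · simp [hw]
  · have := natDegree_wronskian_lt_add hw
    omega

theorem coeff_mul_derivative_of_natDegree_le {a b : R[X]} {m n : ℕ}
    (ha : a.natDegree ≤ m) (hb : b.natDegree ≤ n) :
    (a * derivative b).coeff (m + n - 1) = n * a.coeff m * b.coeff n := by
  cases n with
  | zero => simp [derivative_of_natDegree_zero (Nat.le_zero.mp hb)]
  | succ k =>
    have hb' : (derivative b).natDegree ≤ k := (natDegree_derivative_le b).trans (by omega)
    rw [Nat.add_sub_assoc (by omega), Nat.add_sub_cancel,
      coeff_mul_add_eq_of_natDegree_le ha hb', coeff_derivative]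
    push_cast
    ring

theorem coeff_wronskian_of_natDegree_le {a b : R[X]} {m n : ℕ}
    (ha : a.natDegree ≤ m) (hb : b.natDegree ≤ n) :
    (wronskian a b).coeff (m + n - 1) = (n - m : R) * a.coeff m * b.coeff n := by
  rw [wronskian, coeff_sub, coeff_mul_derivative_of_natDegree_le ha hb, mul_comm (derivative a),
    add_comm m n, coeff_mul_derivative_of_natDegree_le hb ha]
  ring

theorem natDegree_wronskian_mul_self_le {a b : R[X]} {r : ℕ} (hb : b.natDegree ≤ r) :
    (wronskian a b * b).natDegree ≤ 2 * r + a.natDegree - 1 :=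
  natDegree_mul_le.trans (by have := natDegree_wronskian_le a b; omega)

theorem coeff_wronskian_mul_self {a b : R[X]} {r : ℕ} (hb : b.natDegree ≤ r) (hr : 0 < r) :
    (wronskian a b * b).coeff (2 * r + a.natDegree - 1) =
      (r - a.natDegree : R) * a.leadingCoeff * b.coeff r ^ 2 := by
  have hab : (wronskian a b).natDegree ≤ a.natDegree + r - 1 :=
    (natDegree_wronskian_le a b).trans (by omega)
  rw [show 2 * r + a.natDegree - 1 = a.natDegree + r - 1 + r by omega,
    coeff_mul_add_eq_of_natDegree_le hab hb, coeff_wronskian_of_natDegree_le le_rfl hb,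
    coeff_natDegree]
  ring

theorem coeff_wronskian_mul_self_add_wronskian_mul_self {a b c : R[X]} {r : ℕ}
    (hb : b.natDegree ≤ r) (hc : c.natDegree ≤ r) (hr : 0 < r) :
    (wronskian a b * b + wronskian a c * c).coeff (2 * r + a.natDegree - 1) =
      (r - a.natDegree : R) * a.leadingCoeff * (b.coeff r ^ 2 + c.coeff r ^ 2) := by
  rw [coeff_add, coeff_wronskian_mul_self hb hr, coeff_wronskian_mul_self hc hr]
  ring

theorem natDegree_wronskian_mul_lt {a b : R[X]} {r : ℕ} (hb : b.natDegree ≤ r)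
    (har : a.natDegree < r) :
    (wronskian a b * a).natDegree < 2 * r + a.natDegree - 1 :=
  natDegree_mul_le.trans_lt (by have := natDegree_wronskian_le a b; omega)

end Polynomial

theorem coeff_sq_add_coeff_sq_pos {X Y : ℝ[X]} {r : ℕ} (hr : r = max X.natDegree Y.natDegree)
    (hr0 : 0 < r) : 0 < X.coeff r ^ 2 + Y.coeff r ^ 2 := by
  have coeff_ne_zero : ∀ p : ℝ[X], p.natDegree = r → p.coeff r ≠ 0 := fun p hp => by
    rw [← hp, coeff_natDegree, leadingCoeff_ne_zero]
    exact ne_zero_of_natDegree_gt (hp ▸ hr0)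
  rcases max_choice X.natDegree Y.natDegree with hmax | hmax
  · have := coeff_ne_zero X (hmax ▸ hr).symm
    positivity
  · have := coeff_ne_zero Y (hmax ▸ hr).symm
    positivity

theorem natDegree_liftT (p : ℝ[X]) : (liftT p).natDegree = p.natDegree :=
  natDegree_map_eq_of_injective (MvPolynomial.C_injective _ _) p

theorem coeff_liftT (p : ℝ[X]) (n : ℕ) : (liftT p).coeff n = MvPolynomial.C (p.coeff n) :=
  coeff_map _ n

theorem Ptilde_eq (X Y W U V : ℝ[X]) :
    Ptilde X Y W U V = liftT (U * W) * C (MvPolynomial.X 0) + liftT (V * W) * C (MvPolynomial.X 1)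
      - liftT (U * X + V * Y) := by
  simp only [Ptilde, liftT, Polynomial.map_mul, Polynomial.map_add]
  ring

theorem stmt3 (X Y W U V : Polynomial ℝ) (hW : W ≠ 0)
    (hU : U = Polynomial.derivative X * W - X * Polynomial.derivative W)
    (hV : V = Polynomial.derivative Y * W - Y * Polynomial.derivative W)
    (w r : ℕ) (hw : w = W.natDegree) (hr : r = max X.natDegree Y.natDegree)
    (hwr : w < r) :
    (Ptilde X Y W U V).natDegree = 2 * r + w - 1 ∧
    (Ptilde X Y W U V).coeff (2 * r + w - 1) =
      MvPolynomial.C (-(((r : ℝ) - (w : ℝ)) * W.coeff w *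
        ((X.coeff r) ^ 2 + (Y.coeff r) ^ 2))) ∧
    -(((r : ℝ) - (w : ℝ)) * W.coeff w * ((X.coeff r) ^ 2 + (Y.coeff r) ^ 2)) ≠ 0 := by
  obtain rfl : U = wronskian W X := by rw [hU, wronskian]; ring
  obtain rfl : V = wronskian W Y := by rw [hV, wronskian]; ring
  subst hw
  have hXr : X.natDegree ≤ r := hr ▸ le_max_left _ _
  have hYr : Y.natDegree ≤ r := hr ▸ le_max_right _ _
  have hne : (r - W.natDegree : ℝ) * W.leadingCoeff * (X.coeff r ^ 2 + Y.coeff r ^ 2) ≠ 0 :=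
    mul_ne_zero (mul_ne_zero (sub_ne_zero.mpr (by exact_mod_cast hwr.ne'))
      (leadingCoeff_ne_zero.mpr hW)) (coeff_sq_add_coeff_sq_pos hr (by omega)).ne'
  have hQcoeff := coeff_wronskian_mul_self_add_wronskian_mul_self (a := W) hXr hYr (by omega)
  have hQdeg : (wronskian W X * X + wronskian W Y * Y).natDegree = 2 * r + W.natDegree - 1 :=
    natDegree_eq_of_le_of_coeff_ne_zero (natDegree_add_le_of_degree_le
      (natDegree_wronskian_mul_self_le hXr) (natDegree_wronskian_mul_self_le hYr)) (hQcoeff ▸ hne)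
  have hlow : (liftT (wronskian W X * W) * C (MvPolynomial.X 0) +
      liftT (wronskian W Y * W) * C (MvPolynomial.X 1)).natDegree < 2 * r + W.natDegree - 1 := by
    refine (natDegree_add_le _ _).trans_lt (max_lt ?_ ?_) <;>
      refine (natDegree_mul_C_le _ _).trans_lt ?_ <;> rw [natDegree_liftT]
    exacts [natDegree_wronskian_mul_lt hXr hwr, natDegree_wronskian_mul_lt hYr hwr]
  refine ⟨?_, ?_, neg_ne_zero.mpr hne⟩
  · rw [Ptilde_eq, natDegree_sub_eq_right_of_natDegree_lt] <;> rw [natDegree_liftT, hQdeg]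
    exact hlow
  · rw [Ptilde_eq, coeff_sub, coeff_eq_zero_of_natDegree_lt hlow, coeff_liftT, coeff_natDegree,
      hQcoeff, zero_sub, map_neg]
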